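/- arXiv:2502.07168 — 2 statements merged into one kernel-verified Lean document; each statement's English description precedes it below -/
import Mathlib

section
/- Suppose K = 1. For every incentive compatible and individually rational mechanism (Q,T), the profit guarantee satisfies inf_{F ∈ 𝓕} E_F[T(F,θ) − c·Q(F,θ)] ≤ λ·u(Q(δ_λ,λ)) − c·Q(δ_λ,λ), where δ_λ ∈ 𝓕 is the Dirac distribution placing probability one on the type λ; in particular the profit guarantee is at most sup_{q ≥ 0} {λ·u(q) − c·q}. -/
open MeasureTheory Set Filter Topology

noncomputable section

/-- The type space for a single good: `Θ = [0,1]`. -/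
abbrev Theta1 := Set.Icc (0:ℝ) 1

/-- The set `𝓕` of Borel probability measures on `Θ = [0,1]` with mean `lam`. -/
def Fcal1 (lam : ℝ) : Set (Measure Theta1) :=
  {F | IsProbabilityMeasure F ∧ ∫ θ, (θ : ℝ) ∂F = lam}

/-- Incentive compatibility for a single-good mechanism. -/
def IC1 (lam : ℝ) (u : ℝ → ℝ) (Q : Measure Theta1 → Theta1 → ℝ)
    (T : Measure Theta1 → Theta1 → ℝ) : Prop :=
  (∀ F ∈ Fcal1 lam, ∀ θ θ' : Theta1,
      (θ : ℝ) * u (Q F θ') - T F θ' ≤ (θ : ℝ) * u (Q F θ) - T F θ) ∧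
  (∀ F ∈ Fcal1 lam, ∀ F' ∈ Fcal1 lam,
      ∫ θ, ((θ : ℝ) * u (Q F' θ) - T F' θ) ∂F ≤
        ∫ θ, ((θ : ℝ) * u (Q F θ) - T F θ) ∂F)

/-- Individual rationality for a single-good mechanism. -/
def IR1 (lam : ℝ) (u : ℝ → ℝ) (Q : Measure Theta1 → Theta1 → ℝ)
    (T : Measure Theta1 → Theta1 → ℝ) : Prop :=
  ∀ F ∈ Fcal1 lam, 0 ≤ ∫ θ, ((θ : ℝ) * u (Q F θ) - T F θ) ∂F

/-- The profit guarantee `Π(Q,T) = inf_{F ∈ 𝓕} E_F[T(F,θ) - c·Q(F,θ)]` (valued in `EReal`). -/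
def guarantee1 (lam c : ℝ) (Q : Measure Theta1 → Theta1 → ℝ)
    (T : Measure Theta1 → Theta1 → ℝ) : EReal :=
  ⨅ F ∈ Fcal1 lam, ((∫ θ, (T F θ - c * Q F θ) ∂F : ℝ) : EReal)

theorem dirac_mem_Fcal1 {lam : ℝ} {θ : Theta1} (hθ : (θ : ℝ) = lam) :
    Measure.dirac θ ∈ Fcal1 lam :=
  ⟨inferInstance, by rw [integral_dirac, hθ]⟩

theorem IR1.transfer_dirac_le {lam : ℝ} {u : ℝ → ℝ} {Q T : Measure Theta1 → Theta1 → ℝ}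
    (hIR : IR1 lam u Q T) {θ : Theta1} (hθ : (θ : ℝ) = lam) :
    T (Measure.dirac θ) θ ≤ lam * u (Q (Measure.dirac θ) θ) := by
  have h := hIR _ (dirac_mem_Fcal1 hθ)
  rw [integral_dirac, hθ] at h
  linarith

theorem guarantee1_le_dirac {lam : ℝ} (c : ℝ) (Q T : Measure Theta1 → Theta1 → ℝ)
    {θ : Theta1} (hθ : (θ : ℝ) = lam) :
    guarantee1 lam c Q T ≤
      ((T (Measure.dirac θ) θ - c * Q (Measure.dirac θ) θ : ℝ) : EReal) := by
  have h := iInf₂_le (f := fun F (_ : F ∈ Fcal1 lam) =>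
    ((∫ θ, (T F θ - c * Q F θ) ∂F : ℝ) : EReal)) _ (dirac_mem_Fcal1 hθ)
  rwa [integral_dirac] at h

theorem stmt1_general
    (c lam : ℝ)
    (u : ℝ → ℝ)
    (Q T : Measure Theta1 → Theta1 → ℝ)
    (hQpos : ∀ F θ, 0 ≤ Q F θ)
    (hIR : IR1 lam u Q T)
    (θlam : Theta1) (hθlam : (θlam : ℝ) = lam) :
    guarantee1 lam c Q T ≤
        ((lam * u (Q (Measure.dirac θlam) θlam) - c * Q (Measure.dirac θlam) θlam : ℝ) : EReal) ∧
      guarantee1 lam c Q T ≤ ⨆ q : Set.Ici (0:ℝ), ((lam * u q - c * q : ℝ) : EReal) := by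
  set q := Q (Measure.dirac θlam) θlam
  have hdirac : guarantee1 lam c Q T ≤ ((lam * u q - c * q : ℝ) : EReal) :=
    (guarantee1_le_dirac c Q T hθlam).trans <|
      EReal.coe_le_coe_iff.2 (by linarith [hIR.transfer_dirac_le hθlam])
  exact ⟨hdirac, hdirac.trans <|
    le_iSup (fun q : Set.Ici (0:ℝ) => ((lam * u q - c * q : ℝ) : EReal)) ⟨q, hQpos _ _⟩⟩

/-- For `K = 1`, every IC and IR mechanism has profit guarantee at most
`λ·u(Q(δ_λ,λ)) − c·Q(δ_λ,λ)`, where `δ_λ` is the Dirac measure at the type `λ`; in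
particular the profit guarantee is at most `sup_{q ≥ 0} {λ·u(q) − c·q}`. -/
theorem stmt1
    (c lam : ℝ) (hc : 0 < c) (hlam : 0 < lam ∧ lam < 1)
    (u u' : ℝ → ℝ)
    (hu_mono : StrictMonoOn u (Set.Ici 0))
    (hu_conc : StrictConcaveOn ℝ (Set.Ici 0) u)
    (hu_nonneg : ∀ q, 0 ≤ q → 0 ≤ u q)
    (hu_deriv : ∀ q, 0 < q → HasDerivAt u (u' q) q)
    (hu'_zero : Tendsto u' (nhdsWithin 0 (Set.Ioi 0)) atTop)
    (hu'_top : Tendsto u' atTop (nhds 0))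
    (Q T : Measure Theta1 → Theta1 → ℝ)
    (hQpos : ∀ F θ, 0 ≤ Q F θ)
    (hIC : IC1 lam u Q T) (hIR : IR1 lam u Q T)
    (θlam : Theta1) (hθlam : (θlam : ℝ) = lam) :
    guarantee1 lam c Q T ≤
        ((lam * u (Q (Measure.dirac θlam) θlam) - c * Q (Measure.dirac θlam) θlam : ℝ) : EReal) ∧
      guarantee1 lam c Q T ≤ ⨆ q : Set.Ici (0:ℝ), ((lam * u q - c * q : ℝ) : EReal) :=
  stmt1_general c lam u Q T hQpos hIR θlam hθlam

end
end

section
/- The constant symmetric mechanism defined by Q^{d*}_i(F,θ) = q^{d*} for every i = 1,…,K and T^{d*}(F,θ) = λ·u(q^{d*}) for all F ∈ 𝓕 and θ ∈ Θ, where q^{d*} = (u')⁻¹(cK/λ), solves the diagonal-restricted robust pricing problem: it is incentive compatible and individually rational, and for every incentive compatible and individually rational mechanism (Q,T), inf_{F^d ∈ 𝓕^d} E_{F^d}[T(F^d,θ) − c·∑_{i=1}^K Q_i(F^d,θ)] ≤ inf_{F^d ∈ 𝓕^d} E_{F^d}[T^{d*}(F^d,θ) − c·∑_{i=1}^K Q^{d*}_i(F^d,θ)]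 = λ·u(q^{d*}) − cK·q^{d*}. -/
open MeasureTheory Set Filter Topology

noncomputable section

/-- The type space `Θ = [0,1]^K`. -/
abbrev Theta (K : ℕ) := Fin K → Set.Icc (0:ℝ) 1

/-- The set `𝓕` of Borel probability measures on `Θ` whose mean total demand is `lam`. -/
def Fcal (K : ℕ) (lam : ℝ) : Set (Measure (Theta K)) :=
  {F | IsProbabilityMeasure F ∧ ∫ θ, (∑ i, (θ i : ℝ)) ∂F = lam}

/-- The buyer's utility from allocation `q` and transfer `t` at type `θ`. -/
def util (K : ℕ) (u : ℝ → ℝ) (θ : Theta K) (q : Fin K → ℝ) (t : ℝ) : ℝ :=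
  ∑ i, (θ i : ℝ) * u (q i) - t

/-- Incentive compatibility of a mechanism `(Q,T)`. -/
def IC (K : ℕ) (lam : ℝ) (u : ℝ → ℝ) (Q : Measure (Theta K) → Theta K → Fin K → ℝ)
    (T : Measure (Theta K) → Theta K → ℝ) : Prop :=
  (∀ F ∈ Fcal K lam, ∀ θ θ' : Theta K,
      util K u θ (Q F θ') (T F θ') ≤ util K u θ (Q F θ) (T F θ)) ∧
  (∀ F ∈ Fcal K lam, ∀ F' ∈ Fcal K lam,
      ∫ θ, util K u θ (Q F' θ) (T F' θ) ∂F ≤ ∫ θ, util K u θ (Q F θ) (T F θ) ∂F)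

/-- Individual rationality of a mechanism `(Q,T)`. -/
def IR (K : ℕ) (lam : ℝ) (u : ℝ → ℝ) (Q : Measure (Theta K) → Theta K → Fin K → ℝ)
    (T : Measure (Theta K) → Theta K → ℝ) : Prop :=
  ∀ F ∈ Fcal K lam, 0 ≤ ∫ θ, util K u θ (Q F θ) (T F θ) ∂F

/-- The profit guarantee `inf_{F ∈ 𝓕} E_F[T(F,θ) - c·∑ᵢ Qᵢ(F,θ)]` (valued in `EReal`). -/
def guarantee (K : ℕ) (lam c : ℝ) (Q : Measure (Theta K) → Theta K → Fin K → ℝ)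
    (T : Measure (Theta K) → Theta K → ℝ) : EReal :=
  ⨅ F ∈ Fcal K lam, ((∫ θ, (T F θ - c * ∑ i, Q F θ i) ∂F : ℝ) : EReal)

/-- The diagonal `Θ^d = {(t,…,t) : t ∈ [0,1]}` of the type space. -/
def Diag (K : ℕ) : Set (Theta K) := {θ | ∃ t : Set.Icc (0:ℝ) 1, ∀ i, θ i = t}

/-- The set `𝓕^d ⊂ 𝓕` of distributions supported on the diagonal. -/
def FcalD (K : ℕ) (lam : ℝ) : Set (Measure (Theta K)) :=
  {F | F ∈ Fcal K lam ∧ F (Diag K) = 1}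

/-- The diagonal-restricted profit guarantee `inf_{F^d ∈ 𝓕^d} E_{F^d}[T − c·∑ᵢ Qᵢ]`. -/
def guaranteeD (K : ℕ) (lam c : ℝ) (Q : Measure (Theta K) → Theta K → Fin K → ℝ)
    (T : Measure (Theta K) → Theta K → ℝ) : EReal :=
  ⨅ F ∈ FcalD K lam, ((∫ θ, (T F θ - c * ∑ i, Q F θ i) ∂F : ℝ) : EReal)

/-! On the point mass at the diagonal type `(λ/K, …, λ/K)`, individual rationality caps the
transfer by `∑ᵢ (λ/K)·u(qᵢ)`, so any IR mechanism earns at most `K · max_q ((λ/K)·u(q) − c·q)`.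
By concavity this maximum is attained at the tangency point `(λ/K)·u'(q) = c`, i.e. at `q^{d*}`,
and the constant mechanism earns exactly that on every distribution, hence on every diagonal one. -/

lemma ConcaveOn.le_add_mul_sub_of_hasDerivAt {S : Set ℝ} {f : ℝ → ℝ} {f' x y : ℝ}
    (hf : ConcaveOn ℝ S f) (hx : x ∈ S) (hy : y ∈ S) (hf' : HasDerivAt f f' x) :
    f y ≤ f x + f' * (y - x) := by
  rcases lt_trichotomy y x with hyx | rfl | hxy
  · have h := hf.le_slope_of_hasDerivAt hy hx hyx hf'
    rw [slope_def_field, le_div_iff₀ (sub_pos.2 hyx)] at h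
    linarith
  · simp
  · have h := hf.slope_le_of_hasDerivAt hx hy hxy hf'
    rw [slope_def_field, div_le_iff₀ (sub_pos.2 hxy)] at h
    linarith

lemma ConcaveOn.mul_sub_mul_le_of_hasDerivAt {S : Set ℝ} {f : ℝ → ℝ} {f' x y t c : ℝ}
    (hf : ConcaveOn ℝ S f) (hx : x ∈ S) (hy : y ∈ S) (hf' : HasDerivAt f f' x)
    (ht : 0 ≤ t) (htc : t * f' = c) :
    t * f y - c * y ≤ t * f x - c * x := by
  have h := mul_le_mul_of_nonneg_left (hf.le_add_mul_sub_of_hasDerivAt hx hy hf') ht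
  linear_combination h + (y - x) * htc

section Mechanism

variable {K : ℕ} {lam c : ℝ} {u : ℝ → ℝ}

lemma integrable_sum_coord (F : Measure (Theta K)) [IsFiniteMeasure F] :
    Integrable (fun θ : Theta K => ∑ i, (θ i : ℝ)) F := by
  have hmeas : Measurable fun θ : Theta K => ∑ i, (θ i : ℝ) :=
    Finset.measurable_sum _ fun i _ => measurable_subtype_coe.comp (measurable_pi_apply i)
  refine Integrable.of_bound hmeas.aestronglyMeasurable K (ae_of_all _ fun θ => ?_)
  rw [Real.norm_of_nonneg (Finset.sum_nonneg fun i _ => (θ i).2.1)]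
  simpa using Finset.sum_le_sum fun i (_ : i ∈ Finset.univ) => (θ i).2.2

lemma integral_util_const {F : Measure (Theta K)} (hF : F ∈ Fcal K lam) (q p : ℝ) :
    ∫ θ, util K u θ (fun _ => q) p ∂F = lam * u q - p := by
  have : IsProbabilityMeasure F := hF.1
  simp only [util, ← Finset.sum_mul]
  rw [integral_sub ((integrable_sum_coord F).mul_const _) (integrable_const _),
    integral_mul_const, hF.2, integral_const]
  simp

lemma IC_const (q p : ℝ) : IC K lam u (fun _ _ _ => q) (fun _ _ => p) :=
  ⟨fun _ _ _ _ => le_rfl, fun _ _ _ _ => le_rfl⟩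

lemma IR_const {q p : ℝ} (hp : p ≤ lam * u q) : IR K lam u (fun _ _ _ => q) (fun _ _ => p) :=
  fun _ hF => by rw [integral_util_const hF]; linarith

lemma guaranteeD_const (hne : (FcalD K lam).Nonempty) (q p : ℝ) :
    guaranteeD K lam c (fun _ _ _ => q) (fun _ _ => p) = ((p - c * K * q : ℝ) : EReal) := by
  have hval : ∀ F ∈ FcalD K lam, ∫ _ : Theta K, (p - c * ∑ _ : Fin K, q) ∂F = p - c * K * q := by
    intro F hF
    have : IsProbabilityMeasure F := hF.1.1
    simp [mul_assoc]
  simp only [guaranteeD]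
  exact (iInf_congr fun F => iInf_congr fun hF => congrArg _ (hval F hF)).trans (biInf_const hne)

lemma dirac_const_mem_FcalD (t : Icc (0:ℝ) 1) (ht : K * (t : ℝ) = lam) :
    Measure.dirac (Function.const (Fin K) t) ∈ FcalD K lam := by
  refine ⟨⟨inferInstance, ?_⟩, Measure.dirac_apply_of_mem ⟨t, fun _ => rfl⟩⟩
  simp [ht]

lemma sub_mul_sum_le_of_util_nonneg {t : ℝ} {M p : ℝ} {q : Fin K → ℝ}
    (hq : ∀ i, 0 ≤ q i) (hmax : ∀ y, 0 ≤ y → t * u y - c * y ≤ M)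
    (hutil : 0 ≤ ∑ i, t * u (q i) - p) :
    p - c * ∑ i, q i ≤ K * M := by
  calc p - c * ∑ i, q i ≤ ∑ i, (t * u (q i) - c * q i) := by
        rw [Finset.sum_sub_distrib, Finset.mul_sum]; linarith
    _ ≤ ∑ _i : Fin K, M := Finset.sum_le_sum fun i _ => hmax _ (hq i)
    _ = K * M := by simp

lemma guaranteeD_le_of_IR {Q : Measure (Theta K) → Theta K → Fin K → ℝ}
    {T : Measure (Theta K) → Theta K → ℝ} (hQ : ∀ F θ i, 0 ≤ Q F θ i) (hIR : IR K lam u Q T)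
    {t : Icc (0:ℝ) 1} (ht : K * (t : ℝ) = lam) {M : ℝ}
    (hmax : ∀ y, 0 ≤ y → t * u y - c * y ≤ M) :
    guaranteeD K lam c Q T ≤ ((K * M : ℝ) : EReal) := by
  set F := Measure.dirac (Function.const (Fin K) t)
  have hF : F ∈ FcalD K lam := dirac_const_mem_FcalD t ht
  have hutil := hIR F hF.1
  rw [integral_dirac] at hutil
  calc guaranteeD K lam c Q T ≤ ((∫ θ, (T F θ - c * ∑ i, Q F θ i) ∂F : ℝ) : EReal) :=
        iInf₂_le F hF
    _ ≤ ((K * M : ℝ) : EReal) := by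
        rw [EReal.coe_le_coe_iff, integral_dirac]
        exact sub_mul_sum_le_of_util_nonneg (hQ F _) hmax hutil

end Mechanism

theorem stmt8_general
    (K : ℕ) (c lam : ℝ) (hlam : 0 < lam ∧ lam < K)
    (u u' : ℝ → ℝ)
    (hu_conc : StrictConcaveOn ℝ (Set.Ici 0) u)
    (hu_deriv : ∀ x, 0 < x → HasDerivAt u (u' x) x)
    (qd : ℝ) (hqd_pos : 0 < qd) (hqd : lam * u' qd = c * K)
    (Qs : Measure (Theta K) → Theta K → Fin K → ℝ) (Ts : Measure (Theta K) → Theta K → ℝ)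
    (hQs : ∀ F θ i, Qs F θ i = qd) (hTs : ∀ F θ, Ts F θ = lam * u qd) :
    IC K lam u Qs Ts ∧ IR K lam u Qs Ts ∧
      (∀ Q T, (∀ F θ i, 0 ≤ Q F θ i) → IC K lam u Q T → IR K lam u Q T →
        guaranteeD K lam c Q T ≤ guaranteeD K lam c Qs Ts) ∧
      guaranteeD K lam c Qs Ts = ((lam * u qd - c * K * qd : ℝ) : EReal) := by
  obtain rfl : Qs = fun _ _ _ => qd := by ext; apply hQs
  obtain rfl : Ts = fun _ _ => lam * u qd := by ext; apply hTs
  have hK : (0 : ℝ) < K := hlam.1.trans hlam.2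
  let t : Icc (0:ℝ) 1 := ⟨lam / K, div_nonneg hlam.1.le hK.le, (div_le_one hK).2 hlam.2.le⟩
  have hKt : K * (t : ℝ) = lam := mul_div_cancel₀ _ hK.ne'
  have htc : (t : ℝ) * u' qd = c := by
    show lam / K * u' qd = c
    rw [div_mul_eq_mul_div, hqd, mul_div_cancel_right₀ _ hK.ne']
  have hmax (y : ℝ) (hy : 0 ≤ y) : t * u y - c * y ≤ t * u qd - c * qd :=
    hu_conc.concaveOn.mul_sub_mul_le_of_hasDerivAt hqd_pos.le hy (hu_deriv qd hqd_pos) t.2.1 htc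
  have hvalue : guaranteeD K lam c (fun _ _ _ => qd) (fun _ _ => lam * u qd) =
      ((lam * u qd - c * K * qd : ℝ) : EReal) :=
    guaranteeD_const ⟨_, dirac_const_mem_FcalD t hKt⟩ _ _
  refine ⟨IC_const _ _, IR_const le_rfl, fun Q T hQ _ hIR => ?_, hvalue⟩
  rw [hvalue, ← hKt]
  convert guaranteeD_le_of_IR hQ hIR hKt hmax using 2
  ring

/-- The constant symmetric mechanism `Q^{d*}ᵢ(F,θ) = q^{d*}`,
`T^{d*}(F,θ) = λ·u(q^{d*})`, with `q^{d*} = (u')⁻¹(cK/λ)` (i.e. `λ·u'(q^{d*}) = cK`),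
is IC and IR and solves the diagonal-restricted robust pricing problem, with value
`λ·u(q^{d*}) − cK·q^{d*}`. -/
theorem stmt8
    (K : ℕ) (hK : 1 ≤ K) (c lam : ℝ) (hc : 0 < c) (hlam : 0 < lam ∧ lam < K)
    (u u' : ℝ → ℝ)
    (hu_mono : StrictMonoOn u (Set.Ici 0))
    (hu_conc : StrictConcaveOn ℝ (Set.Ici 0) u)
    (hu_nonneg : ∀ x, 0 ≤ x → 0 ≤ u x)
    (hu_deriv : ∀ x, 0 < x → HasDerivAt u (u' x) x)
    (hu'_zero : Tendsto u' (nhdsWithin 0 (Set.Ioi 0)) atTop)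
    (hu'_top : Tendsto u' atTop (nhds 0))
    (qd : ℝ) (hqd_pos : 0 < qd) (hqd : lam * u' qd = c * K)
    (Qs : Measure (Theta K) → Theta K → Fin K → ℝ) (Ts : Measure (Theta K) → Theta K → ℝ)
    (hQs : ∀ F θ i, Qs F θ i = qd) (hTs : ∀ F θ, Ts F θ = lam * u qd) :
    IC K lam u Qs Ts ∧ IR K lam u Qs Ts ∧
      (∀ Q T, (∀ F θ i, 0 ≤ Q F θ i) → IC K lam u Q T → IR K lam u Q T →
        guaranteeD K lam c Q T ≤ guaranteeD K lam c Qs Ts) ∧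
      guaranteeD K lam c Qs Ts = ((lam * u qd - c * K * qd : ℝ) : EReal) :=
  stmt8_general K c lam hlam u u' hu_conc hu_deriv qd hqd_pos hqd Qs Ts hQs hTs

end
end
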